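/- Let (X,d,μ,E_p,F_p,Γ_p) be a regular local p-Dirichlet space. Then: (1) every f ∈ F_p has a quasicontinuous representative, i.e. there exists a quasicontinuous function f̃ : X → ℝ with f = f̃ μ-a.e.; (2) if f,g : X → ℝ are quasicontinuous representatives of elements of F_p and f = g μ-a.e., then Cap({x : f(x) ≠ g(x)}) = 0. -/

import Mathlib

/-!
We measure elements of `F_p` by the subadditive norm `‖u‖_{L^p} + Γ_p⟨u⟩(X)^{1/p}`. The key
estimate is a countable subadditivity of the capacity: if a.e. on an open set `U` one of the
functions `|h_i|` is at least `1`, then the truncations `min (∑_{i<j} |h_i|) 1` increase to a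
function equal to `1` a.e. on `U` which, by lower semicontinuity of the energy, lies in `F_p` with
norm at most `2 ∑ ‖h_i‖`.

Existence: by regularity choose continuous `g_k ∈ F_p` with `‖f - g_k‖ ≤ 8^{-k}`. Off the open
set `G_n = ⋃_k {2^k |g_{k+n+1} - g_{k+n}| > 1}` the `g_k` converge uniformly, and subadditivity
gives `Cap(G_n) → 0`, so their pointwise limit is quasicontinuous. It equals `f` a.e. because
`μ ≤ Cap` and a subsequence of the `g_k` converges to `f` a.e.

Uniqueness: outside the small-capacity open sets `O₁`, `O₂` off which `f` and `g` are continuous,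
`{f ≠ g}` is the trace of an open set and is `μ`-null, so the competitors for `O₁` and `O₂`
together already cover it.
-/

open MeasureTheory ENNReal NNReal Filter Topology Metric Set

noncomputable section

/-- The norm `(‖f‖_{L^p}^p + E_p(f))^{1/p}` on a `p`-Dirichlet space. -/
def fpNorm {X : Type} [MeasurableSpace X] (μ : Measure X) (p : ℝ)
    (Ep : (X → ℝ) → ℝ) (f : X → ℝ) : ℝ :=
  ((∫ x, |f x| ^ p ∂μ) + Ep f) ^ (1 / p)

/-- A local `p`-Dirichlet space `(X, d, μ, E_p, F_p, Γ_p)`. -/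
structure LocalPDirichletSpace (X : Type) [MetricSpace X] [MeasurableSpace X] [BorelSpace X]
    (μ : Measure X) (p : ℝ) : Type where
  /-- `1 < p < ∞`. -/
  hp : 1 < p
  /-- The underlying metric space is locally compact. -/
  locallyCompact : LocallyCompactSpace X
  /-- `μ` is a Radon measure. -/
  radon : μ.Regular
  /-- The domain `F_p ⊆ L^p(X,μ)`. -/
  F : Set (X → ℝ)
  /-- The energy functional `E_p`. -/
  Ep : (X → ℝ) → ℝ
  /-- The energy measures `Γ_p⟨f⟩`. -/
  Γ : (X → ℝ) → Measure X
  memLp : ∀ f ∈ F, MemLp f (ENNReal.ofReal p) μ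
  Ep_nonneg : ∀ f ∈ F, 0 ≤ Ep f
  zero_mem : (0 : X → ℝ) ∈ F
  add_mem : ∀ f ∈ F, ∀ g ∈ F, f + g ∈ F
  smul_mem : ∀ (c : ℝ), ∀ f ∈ F, c • f ∈ F
  /-- Completeness: `F_p` is a Banach space under the norm `fpNorm`. -/
  complete : ∀ fi : ℕ → X → ℝ, (∀ i, fi i ∈ F) →
    (∀ ε > (0 : ℝ), ∃ N, ∀ m ≥ N, ∀ k ≥ N, fpNorm μ p Ep (fi m - fi k) < ε) →
    ∃ f ∈ F, Tendsto (fun i => fpNorm μ p Ep (fi i - f)) atTop (𝓝 0)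
  /-- The total mass of the energy measure is the energy. -/
  mass : ∀ f ∈ F, Γ f Set.univ = ENNReal.ofReal (Ep f)
  /-- Homogeneity. -/
  homog : ∀ f ∈ F, ∀ c : ℝ, Γ (c • f) = ENNReal.ofReal (|c| ^ p) • Γ f
  /-- Sublinearity. -/
  sublinear : ∀ f ∈ F, ∀ g ∈ F, ∀ A : Set X, MeasurableSet A →
    Γ (f + g) A ^ (1 / p) ≤ Γ f A ^ (1 / p) + Γ g A ^ (1 / p)
  /-- Chain rule. -/
  chain : ∀ f ∈ F, ∀ (g : ℝ → ℝ) (L : ℝ≥0), LipschitzWith L g → g 0 = 0 →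
    g ∘ f ∈ F ∧ ∀ A : Set X, MeasurableSet A →
      Γ (g ∘ f) A ≤ ENNReal.ofReal ((L : ℝ) ^ p) * Γ f A
  /-- Locality. -/
  locality : ∀ f ∈ F, ∀ (c : ℝ) (A : Set X), IsOpen A →
    (∀ᵐ x ∂(μ.restrict A), f x = c) → Γ f A = 0
  /-- Weak lower semicontinuity of the energy measures. -/
  lsc : ∀ (f : X → ℝ) (fi : ℕ → X → ℝ), MemLp f (ENNReal.ofReal p) μ →
    (∀ i, fi i ∈ F) →
    Tendsto (fun i => eLpNorm (fi i - f) (ENNReal.ofReal p) μ) atTop (𝓝 0) →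
    (∃ C : ℝ, ∀ i, Ep (fi i) ≤ C) →
    f ∈ F ∧ ∀ A : Set X, MeasurableSet A →
      Γ f A ≤ liminf (fun i => Γ (fi i) A) atTop

variable {X : Type} [MetricSpace X] [MeasurableSpace X] [BorelSpace X] {μ : Measure X} {p : ℝ}

/-- A regular `p`-Dirichlet space: `C₀(X) ∩ F_p` is dense in `F_p` and uniformly dense
in the space `C₀(X)` of continuous compactly supported functions. -/
def LocalPDirichletSpace.IsRegular (D : LocalPDirichletSpace X μ p) : Prop :=
  (∀ f ∈ D.F, ∀ ε > (0 : ℝ), ∃ g ∈ D.F, Continuous g ∧ HasCompactSupport g ∧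
      fpNorm μ p D.Ep (f - g) < ε) ∧
  (∀ f : X → ℝ, Continuous f → HasCompactSupport f → ∀ ε > (0 : ℝ),
      ∃ g ∈ D.F, Continuous g ∧ HasCompactSupport g ∧ ∀ x, |f x - g x| < ε)

/-- The capacity associated to a `p`-Dirichlet space. -/
def LocalPDirichletSpace.cap (D : LocalPDirichletSpace X μ p) (A : Set X) : ℝ≥0∞ :=
  ⨅ (f : X → ℝ) (_ : f ∈ D.F ∧ ∃ U : Set X, IsOpen U ∧ A ⊆ U ∧
      ∀ᵐ x ∂(μ.restrict U), f x = 1),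
    ENNReal.ofReal ((∫ x, |f x| ^ p ∂μ) + D.Ep f)

/-- Quasicontinuity with respect to the capacity of a `p`-Dirichlet space. -/
def LocalPDirichletSpace.QuasiContinuous (D : LocalPDirichletSpace X μ p) (f : X → ℝ) : Prop :=
  ∀ ε : ℝ≥0∞, 0 < ε → ∃ O : Set X, IsOpen O ∧ D.cap O < ε ∧ ContinuousOn f Oᶜ

/-- The measure `Λ_φ = ∑ Γ_p⟨φ i⟩`. -/
def LocalPDirichletSpace.Lam (D : LocalPDirichletSpace X μ p) {n : ℕ}
    (φ : Fin n → X → ℝ) : Measure X :=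
  ∑ i, D.Γ (φ i)

/-- `p`-independence of `φ = (φ₁, …, φₙ)` on a set `A`. -/
def LocalPDirichletSpace.PIndependentOn (D : LocalPDirichletSpace X μ p) {n : ℕ}
    (φ : Fin n → X → ℝ) (A : Set X) : Prop :=
  ∃ S : Set (EuclideanSpace ℝ (Fin n)), S.Countable ∧
    S ⊆ Metric.sphere (0 : EuclideanSpace ℝ (Fin n)) 1 ∧
    Metric.sphere (0 : EuclideanSpace ℝ (Fin n)) 1 ⊆ closure S ∧
    ∀ᵐ x ∂((D.Lam φ).restrict A),
      0 < ⨅ l ∈ S, (D.Γ (fun y => ∑ i, l i * φ i y)).rnDeriv (D.Lam φ) x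

theorem tendsto_eLpNorm_sub_of_dominated {α E : Type*} [MeasurableSpace α] {ν : Measure α}
    [NormedAddCommGroup E] {q : ℝ≥0∞} (hq0 : q ≠ 0) (hq : q ≠ ∞) {F : ℕ → α → E} {f : α → E}
    {g : α → ℝ} (hF : ∀ n, AEStronglyMeasurable (F n) ν) (hf : AEStronglyMeasurable f ν)
    (hg : MemLp g q ν) (hbound : ∀ n, ∀ᵐ x ∂ν, ‖F n x - f x‖ ≤ g x)
    (hlim : ∀ᵐ x ∂ν, Tendsto (fun n => F n x) atTop (𝓝 (f x))) :
    Tendsto (fun n => eLpNorm (F n - f) q ν) atTop (𝓝 0) := by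
  have hq' : 0 < q.toReal := ENNReal.toReal_pos hq0 hq
  have hint : Tendsto (fun n => ∫⁻ x, ‖F n x - f x‖ₑ ^ q.toReal ∂ν) atTop (𝓝 0) := by
    have := tendsto_lintegral_of_dominated_convergence' (f := fun _ => 0)
      (fun x => ‖g x‖ₑ ^ q.toReal) (fun n => ((hF n).sub hf).enorm.pow_const _)
      (fun n => (hbound n).mono fun x hx => ENNReal.rpow_le_rpow
        (enorm_le_iff_norm_le.2 (hx.trans (le_abs_self _))) hq'.le)
      (lintegral_rpow_enorm_lt_top_of_eLpNorm_lt_top hq0 hq hg.eLpNorm_lt_top).ne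
      (hlim.mono fun x hx => by
        simpa [ENNReal.zero_rpow_of_pos hq'] using
          ((continuous_enorm.tendsto 0).comp (tendsto_sub_nhds_zero_iff.2 hx)).ennrpow_const
            q.toReal)
    simpa using this
  simp_rw [eLpNorm_eq_lintegral_rpow_enorm_toReal hq0 hq, Pi.sub_apply]
  simpa [ENNReal.zero_rpow_of_pos (inv_pos.2 hq')] using hint.ennrpow_const (1 / q.toReal)

theorem tendstoUniformlyOn_limUnder_of_dist_le_geometric_two {α β : Type*} [MetricSpace β]
    [CompleteSpace β] [Nonempty β] {u : ℕ → α → β} {s : Set α} {C : ℝ}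
    (hu : ∀ k, ∀ x ∈ s, dist (u k x) (u (k + 1) x) ≤ C / 2 / 2 ^ k) :
    TendstoUniformlyOn u (fun x => limUnder atTop (u · x)) atTop s := by
  have hlim : ∀ x ∈ s, Tendsto (u · x) atTop (𝓝 (limUnder atTop (u · x))) := fun x hx =>
    (cauchySeq_of_le_geometric_two (hu · x hx)).tendsto_limUnder
  refine Metric.tendstoUniformlyOn_iff.2 fun ε hε => ?_
  have hC : Tendsto (fun k : ℕ => C / 2 ^ k) atTop (𝓝 0) :=
    tendsto_const_nhds.div_atTop (tendsto_pow_atTop_atTop_of_one_lt (one_lt_two (α := ℝ)))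
  filter_upwards [hC.eventually_lt_const hε] with k hk x hx
  rw [dist_comm]
  exact (dist_le_of_le_geometric_two_of_tendsto (hu · x hx) (hlim x hx) k).trans_lt hk

def truncSumAbs {ι α : Type*} (h : ι → α → ℝ) (s : Finset ι) (x : α) : ℝ :=
  min (∑ i ∈ s, |h i x|) 1

theorem truncSumAbs_eq_one {ι α : Type*} {h : ι → α → ℝ} {s : Finset ι} {x : α}
    (hx : ∃ i ∈ s, 1 ≤ |h i x|) : truncSumAbs h s x = 1 := by
  obtain ⟨i, hi, h1⟩ := hx
  exact min_eq_right (h1.trans (Finset.single_le_sum (fun j _ => abs_nonneg (h j x)) hi))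

theorem truncSumAbs_nonneg {ι α : Type*} (h : ι → α → ℝ) (s : Finset ι) (x : α) :
    0 ≤ truncSumAbs h s x :=
  le_min (Finset.sum_nonneg fun _ _ => abs_nonneg _) zero_le_one

theorem truncSumAbs_le_one {ι α : Type*} (h : ι → α → ℝ) (s : Finset ι) (x : α) :
    truncSumAbs h s x ≤ 1 :=
  min_le_right _ _

theorem truncSumAbs_mono {ι α : Type*} (h : ι → α → ℝ) {s t : Finset ι} (hst : s ⊆ t) (x : α) :
    truncSumAbs h s x ≤ truncSumAbs h t x :=
  min_le_min_right 1 (Finset.sum_le_sum_of_subset_of_nonneg hst fun _ _ _ => abs_nonneg _)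

namespace LocalPDirichletSpace

theorem p_pos (D : LocalPDirichletSpace X μ p) : 0 < p := one_pos.trans D.hp

variable (D : LocalPDirichletSpace X μ p)

/-- Unlike `fpNorm`, this norm is subadditive (Minkowski plus sublinearity of `Γ_p`); the two
are comparable up to a factor `2`. -/
def fnorm (u : X → ℝ) : ℝ≥0∞ :=
  eLpNorm u (ENNReal.ofReal p) μ + D.Γ u univ ^ (1 / p)

theorem ofReal_integral_add_Ep {u : X → ℝ} (hu : u ∈ D.F) :
    ENNReal.ofReal ((∫ x, |u x| ^ p ∂μ) + D.Ep u) =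
      eLpNorm u (ENNReal.ofReal p) μ ^ p + D.Γ u univ := by
  have hp := D.p_pos
  have hint : 0 ≤ ∫ x, |u x| ^ p ∂μ := integral_nonneg fun x => by positivity
  rw [ENNReal.ofReal_add hint (D.Ep_nonneg u hu), D.mass u hu,
    (D.memLp u hu).eLpNorm_eq_integral_rpow_norm (by simpa using hp) ENNReal.ofReal_ne_top,
    ENNReal.toReal_ofReal hp.le, ENNReal.ofReal_rpow_of_nonneg (by positivity) hp.le,
    Real.rpow_inv_rpow (by simpa using hint) hp.ne']
  simp

theorem eLpNorm_le_fnorm (u : X → ℝ) : eLpNorm u (ENNReal.ofReal p) μ ≤ D.fnorm u :=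
  le_self_add

theorem Γ_univ_le_fnorm_rpow (u : X → ℝ) : D.Γ u univ ≤ D.fnorm u ^ p := by
  calc D.Γ u univ = (D.Γ u univ ^ (1 / p)) ^ p := by
        rw [← ENNReal.rpow_mul, one_div_mul_cancel D.p_pos.ne', ENNReal.rpow_one]
    _ ≤ D.fnorm u ^ p := ENNReal.rpow_le_rpow le_add_self D.p_pos.le

theorem fnorm_le_two_mul_rpow {u : X → ℝ} (hu : u ∈ D.F) :
    D.fnorm u ≤ 2 * ENNReal.ofReal ((∫ x, |u x| ^ p ∂μ) + D.Ep u) ^ (1 / p) := by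
  have hp : 0 ≤ 1 / p := one_div_nonneg.2 D.p_pos.le
  rw [D.ofReal_integral_add_Ep hu, two_mul]
  refine add_le_add ?_ (ENNReal.rpow_le_rpow le_add_self hp)
  calc eLpNorm u (ENNReal.ofReal p) μ = (eLpNorm u (ENNReal.ofReal p) μ ^ p) ^ (1 / p) := by
        rw [← ENNReal.rpow_mul, mul_one_div_cancel D.p_pos.ne', ENNReal.rpow_one]
    _ ≤ _ := ENNReal.rpow_le_rpow le_self_add hp

theorem ofReal_integral_add_Ep_le {u : X → ℝ} (hu : u ∈ D.F) :
    ENNReal.ofReal ((∫ x, |u x| ^ p ∂μ) + D.Ep u) ≤ 2 * D.fnorm u ^ p := by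
  rw [D.ofReal_integral_add_Ep hu, two_mul]
  exact add_le_add (ENNReal.rpow_le_rpow (D.eLpNorm_le_fnorm u) D.p_pos.le)
    (D.Γ_univ_le_fnorm_rpow u)

theorem fnorm_add_le {u v : X → ℝ} (hu : u ∈ D.F) (hv : v ∈ D.F) :
    D.fnorm (u + v) ≤ D.fnorm u + D.fnorm v := by
  rw [fnorm, fnorm, fnorm, add_add_add_comm]
  have hp : 1 ≤ ENNReal.ofReal p := by simpa using D.hp.le
  exact add_le_add (eLpNorm_add_le (D.memLp u hu).1 (D.memLp v hv).1 hp)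
    (D.sublinear u hu v hv univ MeasurableSet.univ)

theorem fnorm_smul (c : ℝ) {u : X → ℝ} (hu : u ∈ D.F) : D.fnorm (c • u) = ‖c‖ₑ * D.fnorm u := by
  rw [fnorm, fnorm, eLpNorm_const_smul, D.homog u hu, mul_add, Measure.smul_apply, smul_eq_mul,
    ENNReal.mul_rpow_of_nonneg _ _ (one_div_nonneg.2 D.p_pos.le),
    ← ENNReal.ofReal_rpow_of_nonneg (abs_nonneg c) D.p_pos.le, ← ENNReal.rpow_mul,
    mul_one_div_cancel D.p_pos.ne', ENNReal.rpow_one, Real.enorm_eq_ofReal_abs]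

theorem sub_mem {u v : X → ℝ} (hu : u ∈ D.F) (hv : v ∈ D.F) : u - v ∈ D.F := by
  simpa [sub_eq_add_neg] using D.add_mem u hu _ (D.smul_mem (-1) v hv)

theorem fnorm_zero : D.fnorm 0 = 0 := by
  simpa using D.fnorm_smul 0 D.zero_mem

theorem fnorm_sub_le {u v : X → ℝ} (hu : u ∈ D.F) (hv : v ∈ D.F) :
    D.fnorm (u - v) ≤ D.fnorm u + D.fnorm v := by
  have h := D.fnorm_add_le hu (D.smul_mem (-1) v hv)
  rwa [D.fnorm_smul (-1) hv, neg_one_smul, ← sub_eq_add_neg, enorm_neg, enorm_one, one_mul] at h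

theorem comp_mem_and_fnorm_le {u : X → ℝ} (hu : u ∈ D.F) {φ : ℝ → ℝ} {L : ℝ≥0}
    (hφ : LipschitzWith L φ) (hφ0 : φ 0 = 0) :
    φ ∘ u ∈ D.F ∧ D.fnorm (φ ∘ u) ≤ L * D.fnorm u := by
  obtain ⟨hmem, hΓ⟩ := D.chain u hu φ L hφ hφ0
  refine ⟨hmem, ?_⟩
  rw [fnorm, fnorm, mul_add]
  refine add_le_add ?_ ?_
  · refine eLpNorm_le_nnreal_smul_eLpNorm_of_ae_le_mul (ae_of_all _ fun x => ?_) _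
    rw [← NNReal.coe_le_coe]
    simpa [hφ0] using hφ.dist_le_mul (u x) 0
  · calc D.Γ (φ ∘ u) univ ^ (1 / p)
        ≤ (ENNReal.ofReal ((L : ℝ) ^ p) * D.Γ u univ) ^ (1 / p) :=
          ENNReal.rpow_le_rpow (hΓ univ MeasurableSet.univ) (one_div_nonneg.2 D.p_pos.le)
      _ = L * D.Γ u univ ^ (1 / p) := by
          rw [ENNReal.mul_rpow_of_nonneg _ _ (one_div_nonneg.2 D.p_pos.le),
            ← ENNReal.ofReal_rpow_of_nonneg L.coe_nonneg D.p_pos.le, ← ENNReal.rpow_mul,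
            mul_one_div_cancel D.p_pos.ne', ENNReal.rpow_one, ENNReal.ofReal_coe_nnreal]

theorem cap_le_of_ae_eq_one {A U : Set X} {h : X → ℝ} (hh : h ∈ D.F) (hU : IsOpen U)
    (hAU : A ⊆ U) (h1 : ∀ᵐ x ∂μ.restrict U, h x = 1) : D.cap A ≤ 2 * D.fnorm h ^ p :=
  (iInf₂_le h ⟨hh, U, hU, hAU, h1⟩).trans (D.ofReal_integral_add_Ep_le hh)

theorem measure_le_cap (A : Set X) : μ A ≤ D.cap A := by
  refine le_iInf₂ fun h ⟨hh, U, _, hAU, h1⟩ => ?_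
  calc μ A ≤ μ U := measure_mono hAU
    _ = ∫⁻ x in U, ‖h x‖ₑ ^ p ∂μ := by
        rw [← setLIntegral_one]
        refine lintegral_congr_ae (h1.mono fun x hx => ?_)
        simp [hx]
    _ ≤ ∫⁻ x, ‖h x‖ₑ ^ p ∂μ := lintegral_mono' Measure.restrict_le_self le_rfl
    _ = eLpNorm h (ENNReal.ofReal p) μ ^ p := by
        rw [eLpNorm_eq_lintegral_rpow_enorm_toReal (by simpa using D.p_pos) ENNReal.ofReal_ne_top,
          ENNReal.toReal_ofReal D.p_pos.le, ← ENNReal.rpow_mul, one_div_mul_cancel D.p_pos.ne',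
          ENNReal.rpow_one]
    _ ≤ _ := by rw [D.ofReal_integral_add_Ep hh]; exact le_self_add

theorem exists_fnorm_le_of_cap_lt {A : Set X} {ε : ℝ≥0∞} (hA : D.cap A < ε) :
    ∃ h ∈ D.F, ∃ U, IsOpen U ∧ A ⊆ U ∧ (∀ᵐ x ∂μ.restrict U, h x = 1) ∧
      D.fnorm h ≤ 2 * ε ^ (1 / p) := by
  obtain ⟨h, hA⟩ := iInf_lt_iff.1 hA
  obtain ⟨⟨hh, U, hU, hAU, h1⟩, hlt⟩ := iInf_lt_iff.1 hA
  exact ⟨h, hh, U, hU, hAU, h1, (D.fnorm_le_two_mul_rpow hh).trans <| mul_le_mul_right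
    (ENNReal.rpow_le_rpow hlt.le (one_div_nonneg.2 D.p_pos.le)) 2⟩

theorem sum_abs_mem_and_fnorm_le {ι : Type*} {h : ι → X → ℝ} (s : Finset ι)
    (hh : ∀ i ∈ s, h i ∈ D.F) :
    (fun x => ∑ i ∈ s, |h i x|) ∈ D.F ∧ D.fnorm (fun x => ∑ i ∈ s, |h i x|) ≤
      ∑ i ∈ s, D.fnorm (h i) := by
  classical
  induction s using Finset.induction_on with
  | empty => simpa [← Pi.zero_def, D.fnorm_zero] using D.zero_mem
  | insert i s hi ih =>
    obtain ⟨hsF, hsM⟩ := ih fun j hj => hh j (Finset.mem_insert_of_mem hj)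
    obtain ⟨hiF, hiM⟩ := D.comp_mem_and_fnorm_le (hh i (Finset.mem_insert_self i s))
      lipschitzWith_one_norm norm_zero
    have hsum : (fun x => ∑ j ∈ insert i s, |h j x|) =
        (norm ∘ h i) + fun x => ∑ j ∈ s, |h j x| := by
      ext x; simp [Finset.sum_insert hi]
    rw [hsum, Finset.sum_insert hi]
    refine ⟨D.add_mem _ hiF _ hsF, (D.fnorm_add_le hiF hsF).trans (add_le_add ?_ hsM)⟩
    simpa using hiM

theorem truncSumAbs_mem_and_fnorm_le {ι : Type*} {h : ι → X → ℝ} (s : Finset ι)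
    (hh : ∀ i ∈ s, h i ∈ D.F) :
    truncSumAbs h s ∈ D.F ∧ D.fnorm (truncSumAbs h s) ≤ ∑ i ∈ s, D.fnorm (h i) := by
  obtain ⟨hF, hM⟩ := D.sum_abs_mem_and_fnorm_le s hh
  obtain ⟨hF', hM'⟩ := D.comp_mem_and_fnorm_le hF (LipschitzWith.id.min_const 1)
    (by norm_num : min (0 : ℝ) 1 = 0)
  exact ⟨hF', hM'.trans (by simpa using hM)⟩

theorem cap_le_of_ae_exists_one_le_abs {ι : Type*} {A U : Set X} {h : ι → X → ℝ}
    {s : Finset ι} (hh : ∀ i ∈ s, h i ∈ D.F) (hU : IsOpen U) (hAU : A ⊆ U)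
    (hae : ∀ᵐ x ∂μ.restrict U, ∃ i ∈ s, 1 ≤ |h i x|) :
    D.cap A ≤ 2 * (∑ i ∈ s, D.fnorm (h i)) ^ p := by
  obtain ⟨hF, hM⟩ := D.truncSumAbs_mem_and_fnorm_le s hh
  exact (D.cap_le_of_ae_eq_one hF hU hAU (hae.mono fun x => truncSumAbs_eq_one)).trans
    (mul_le_mul_right (ENNReal.rpow_le_rpow hM D.p_pos.le) 2)

theorem mem_and_fnorm_le_of_monotone {T : ℕ → X → ℝ} {f : X → ℝ} {s : ℝ≥0∞}
    (hT : ∀ j, T j ∈ D.F) (hT0 : ∀ j x, 0 ≤ T j x) (hmono : ∀ x, Monotone (T · x))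
    (hlim : ∀ x, Tendsto (T · x) atTop (𝓝 (f x))) (hs : s ≠ ∞) (hM : ∀ j, D.fnorm (T j) ≤ s) :
    f ∈ D.F ∧ D.fnorm f ≤ 2 * s := by
  have hTm : ∀ j, AEStronglyMeasurable (T j) μ := fun j => (D.memLp _ (hT j)).1
  have hfm : AEStronglyMeasurable f μ := aestronglyMeasurable_of_tendsto_ae atTop hTm
    (ae_of_all _ hlim)
  have hLp : eLpNorm f (ENNReal.ofReal p) μ ≤ s :=
    Lp.eLpNorm_le_of_ae_tendsto (Eventually.of_forall fun j => (D.eLpNorm_le_fnorm _).trans (hM j))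
      hTm (ae_of_all _ hlim)
  have hmem : MemLp f (ENNReal.ofReal p) μ := ⟨hfm, hLp.trans_lt hs.lt_top⟩
  have hΓT : ∀ j, D.Γ (T j) univ ≤ s ^ p := fun j =>
    (D.Γ_univ_le_fnorm_rpow _).trans (ENNReal.rpow_le_rpow (hM j) D.p_pos.le)
  have hconv : Tendsto (fun j => eLpNorm (T j - f) (ENNReal.ofReal p) μ) atTop (𝓝 0) := by
    refine tendsto_eLpNorm_sub_of_dominated (by simpa using D.p_pos) ENNReal.ofReal_ne_top hTm hfm
      hmem (fun j => ae_of_all _ fun x => ?_) (ae_of_all _ hlim)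
    have hle : T j x ≤ f x := (hmono x).ge_of_tendsto (hlim x) j
    rw [Real.norm_eq_abs, abs_of_nonpos (by linarith)]
    linarith [hT0 j x]
  have hEp : ∀ j, D.Ep (T j) ≤ (s ^ p).toReal := fun j => by
    rw [← ENNReal.toReal_ofReal (D.Ep_nonneg _ (hT j)), ← D.mass _ (hT j)]
    exact ENNReal.toReal_mono (ENNReal.rpow_ne_top_of_nonneg D.p_pos.le hs) (hΓT j)
  obtain ⟨hfF, hΓ⟩ := D.lsc f T hmem hT hconv ⟨_, hEp⟩
  refine ⟨hfF, ?_⟩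
  have hΓf : D.Γ f univ ≤ s ^ p :=
    (hΓ univ MeasurableSet.univ).trans (liminf_le_of_frequently_le' (Frequently.of_forall hΓT))
  calc D.fnorm f ≤ s + (s ^ p) ^ (1 / p) :=
        add_le_add hLp (ENNReal.rpow_le_rpow hΓf (one_div_nonneg.2 D.p_pos.le))
    _ = 2 * s := by
        rw [← ENNReal.rpow_mul, mul_one_div_cancel D.p_pos.ne', ENNReal.rpow_one, two_mul]

theorem cap_le_of_ae_exists_one_le_abs_tsum {A U : Set X} {h : ℕ → X → ℝ}
    (hh : ∀ i, h i ∈ D.F) (hU : IsOpen U) (hAU : A ⊆ U)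
    (hae : ∀ᵐ x ∂μ.restrict U, ∃ i, 1 ≤ |h i x|) :
    D.cap A ≤ 2 * (2 * ∑' i, D.fnorm (h i)) ^ p := by
  set s := ∑' i, D.fnorm (h i)
  rcases eq_or_ne s ∞ with hs | hs
  · simp [hs, ENNReal.top_rpow_of_pos D.p_pos]
  set T : ℕ → X → ℝ := fun j => truncSumAbs h (Finset.range j)
  have hmono : ∀ x, Monotone (T · x) := fun x i j hij =>
    truncSumAbs_mono h (Finset.range_subset_range.2 hij) x
  have hbdd : ∀ x, BddAbove (range (T · x)) := fun x =>
    ⟨1, forall_mem_range.2 fun j => truncSumAbs_le_one h _ x⟩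
  have hT : ∀ j, T j ∈ D.F ∧ D.fnorm (T j) ≤ s := fun j =>
    (D.truncSumAbs_mem_and_fnorm_le _ fun i _ => hh i).imp_right
      (·.trans (ENNReal.sum_le_tsum _))
  obtain ⟨hF, hM⟩ := D.mem_and_fnorm_le_of_monotone (fun j => (hT j).1)
    (fun j => truncSumAbs_nonneg h _) hmono (fun x => tendsto_atTop_ciSup (hmono x) (hbdd x)) hs
    (fun j => (hT j).2)
  refine (D.cap_le_of_ae_eq_one hF hU hAU (hae.mono fun x ⟨i, hi⟩ => ?_)).trans
    (mul_le_mul_right (ENNReal.rpow_le_rpow hM D.p_pos.le) 2)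
  refine le_antisymm (ciSup_le fun j => truncSumAbs_le_one h _ x) ?_
  exact le_ciSup_of_le (hbdd x) (i + 1)
    (truncSumAbs_eq_one ⟨i, Finset.self_mem_range_succ i, hi⟩).ge

theorem cap_setOf_ne_le {f g : X → ℝ} (hf : D.QuasiContinuous f) (hg : D.QuasiContinuous g)
    (hfg : f =ᵐ[μ] g) {ε : ℝ≥0∞} (hε : 0 < ε) :
    D.cap {x | f x ≠ g x} ≤ 2 * (4 * ε ^ (1 / p)) ^ p := by
  obtain ⟨O₁, -, hcap₁, hf₁⟩ := hf ε hε
  obtain ⟨O₂, -, hcap₂, hg₂⟩ := hg ε hε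
  obtain ⟨h₁, hh₁, U₁, hU₁, hOU₁, h₁1, hM₁⟩ := D.exists_fnorm_le_of_cap_lt hcap₁
  obtain ⟨h₂, hh₂, U₂, hU₂, hOU₂, h₂1, hM₂⟩ := D.exists_fnorm_le_of_cap_lt hcap₂
  have hcont : ContinuousOn (f - g) (O₁ ∪ O₂)ᶜ :=
    (hf₁.mono (compl_subset_compl.2 subset_union_left)).sub
      (hg₂.mono (compl_subset_compl.2 subset_union_right))
  -- off `O₁ ∪ O₂`, the set `{f ≠ g}` is the trace of an open set `W`
  obtain ⟨W, hW, hWeq⟩ := _root_.continuousOn_iff'.1 hcont {0}ᶜ isOpen_compl_singleton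
  have hmemW : ∀ x ∉ O₁ ∪ O₂, x ∈ W ↔ f x ≠ g x := fun x hx => by
    rw [mem_union, not_or] at hx
    simpa [sub_eq_zero, hx.1, hx.2] using (Set.ext_iff.1 hWeq x).symm
  have hsub : {x | f x ≠ g x} ⊆ U₁ ∪ U₂ ∪ W := fun x hx => by
    by_cases hxO : x ∈ O₁ ∪ O₂
    · exact Or.inl (hxO.imp (hOU₁ ·) (hOU₂ ·))
    · exact Or.inr ((hmemW x hxO).2 hx)
  have hWsub : W ⊆ U₁ ∪ U₂ ∪ {x | f x ≠ g x} := fun x hx => by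
    by_cases hxO : x ∈ O₁ ∪ O₂
    · exact Or.inl (hxO.imp (hOU₁ ·) (hOU₂ ·))
    · exact Or.inr ((hmemW x hxO).1 hx)
  have hnull : μ.restrict {x | f x ≠ g x} = 0 := Measure.restrict_eq_zero.2 (ae_iff.1 hfg)
  have hae : ∀ᵐ x ∂μ.restrict (U₁ ∪ U₂ ∪ W), ∃ i ∈ Finset.univ, 1 ≤ |![h₁, h₂] i x| := by
    have hU₁₂ : ∀ᵐ x ∂μ.restrict (U₁ ∪ U₂), ∃ i ∈ Finset.univ, 1 ≤ |![h₁, h₂] i x| := by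
      rw [ae_restrict_union_iff]
      exact ⟨h₁1.mono fun x hx => ⟨0, by simp [hx]⟩, h₂1.mono fun x hx => ⟨1, by simp [hx]⟩⟩
    rw [ae_restrict_union_iff]
    refine ⟨hU₁₂, ae_restrict_of_ae_restrict_of_subset hWsub ?_⟩
    rw [ae_restrict_union_iff, hnull]
    exact ⟨hU₁₂, by simp⟩
  calc D.cap {x | f x ≠ g x} ≤ 2 * (∑ i, D.fnorm (![h₁, h₂] i)) ^ p :=
        D.cap_le_of_ae_exists_one_le_abs (fun i _ => by fin_cases i <;> assumption)
          ((hU₁.union hU₂).union hW) hsub hae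
    _ ≤ 2 * (4 * ε ^ (1 / p)) ^ p := by
        refine mul_le_mul_right (ENNReal.rpow_le_rpow ?_ D.p_pos.le) 2
        calc ∑ i, D.fnorm (![h₁, h₂] i) ≤ 2 * ε ^ (1 / p) + 2 * ε ^ (1 / p) := by
              simpa using add_le_add hM₁ hM₂
          _ = 4 * ε ^ (1 / p) := by ring

theorem cap_setOf_ne_eq_zero {f g : X → ℝ} (hf : D.QuasiContinuous f)
    (hg : D.QuasiContinuous g) (hfg : f =ᵐ[μ] g) : D.cap {x | f x ≠ g x} = 0 := by
  have hp := D.p_pos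
  have hlim : Tendsto (fun ε : ℝ≥0∞ => 2 * (4 * ε ^ (1 / p)) ^ p) (𝓝[>] 0) (𝓝 0) := by
    have hcont : Continuous fun ε : ℝ≥0∞ => 2 * (4 * ε ^ (1 / p)) ^ p :=
      (ENNReal.continuous_const_mul (by norm_num)).comp <| (ENNReal.continuous_rpow_const).comp <|
        (ENNReal.continuous_const_mul (by norm_num)).comp ENNReal.continuous_rpow_const
    simpa [ENNReal.zero_rpow_of_pos hp, ENNReal.zero_rpow_of_pos (inv_pos.2 hp)] using
      (hcont.tendsto 0).mono_left (nhdsWithin_le_nhds (s := Ioi 0))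
  exact nonpos_iff_eq_zero.1 <| ge_of_tendsto hlim <|
    eventually_nhdsWithin_of_forall fun ε hε => D.cap_setOf_ne_le hf hg hfg hε

theorem cap_iUnion_setOf_one_lt_le {w : ℕ → X → ℝ} (hw : ∀ k, w k ∈ D.F)
    (hwc : ∀ k, Continuous (w k)) :
    D.cap (⋃ k, {x | 1 < 2 ^ k * |w k x|}) ≤ 2 * (2 * ∑' k, 2 ^ k * D.fnorm (w k)) ^ p := by
  have hU : IsOpen (⋃ k, {x | 1 < 2 ^ k * |w k x|}) :=
    isOpen_iUnion fun k => isOpen_lt continuous_const (continuous_const.mul (hwc k).abs)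
  have hae : ∀ᵐ x ∂μ.restrict (⋃ k, {x | 1 < 2 ^ k * |w k x|}), ∃ k, 1 ≤ |((2 : ℝ) ^ k • w k) x| :=
    ae_restrict_of_forall_mem hU.measurableSet fun x hx => by
      obtain ⟨k, hk⟩ := mem_iUnion.1 hx
      exact ⟨k, by simpa [abs_mul] using hk.le⟩
  simpa [D.fnorm_smul _ (hw _), enorm_eq_nnnorm] using
    D.cap_le_of_ae_exists_one_le_abs_tsum (fun k => D.smul_mem _ _ (hw k)) hU subset_rfl hae

theorem exists_quasiContinuous_ae_eq_of_tendsto {f : X → ℝ} (hf : AEStronglyMeasurable f μ)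
    {g : ℕ → X → ℝ} (hg : ∀ k, g k ∈ D.F) (hgc : ∀ k, Continuous (g k))
    (hsum : ∑' k, 2 ^ k * D.fnorm (g (k + 1) - g k) ≠ ∞)
    (hlim : Tendsto (fun k => eLpNorm (g k - f) (ENNReal.ofReal p) μ) atTop (𝓝 0)) :
    ∃ f', D.QuasiContinuous f' ∧ f =ᵐ[μ] f' := by
  set w : ℕ → X → ℝ := fun k => g (k + 1) - g k
  have hwF : ∀ k, w k ∈ D.F := fun k => D.sub_mem (hg _) (hg _)
  have hwc : ∀ k, Continuous (w k) := fun k => (hgc _).sub (hgc _)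
  set G : ℕ → Set X := fun n => ⋃ k, {x | 1 < 2 ^ k * |w (k + n) x|}
  have hGopen : ∀ n, IsOpen (G n) := fun n => isOpen_iUnion fun k =>
    isOpen_lt continuous_const (continuous_const.mul (hwc _).abs)
  have hcapG : Tendsto (fun n => D.cap (G n)) atTop (𝓝 0) := by
    have hφ : Tendsto (fun s : ℝ≥0∞ => 2 * (2 * s) ^ p) (𝓝 0) (𝓝 0) := by
      have hc : Continuous fun s : ℝ≥0∞ => 2 * (2 * s) ^ p :=
        (ENNReal.continuous_const_mul (by norm_num)).comp <| ENNReal.continuous_rpow_const.comp <|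
          ENNReal.continuous_const_mul (by norm_num)
      simpa [ENNReal.zero_rpow_of_pos D.p_pos] using hc.tendsto 0
    refine tendsto_of_tendsto_of_tendsto_of_le_of_le tendsto_const_nhds
      (hφ.comp (ENNReal.tendsto_sum_nat_add _ hsum)) (fun _ => zero_le) fun n => ?_
    refine (D.cap_iUnion_setOf_one_lt_le (fun k => hwF (k + n)) fun k => hwc (k + n)).trans ?_
    dsimp only [Function.comp_apply]
    gcongr with k
    · exact D.p_pos.le
    · exact one_le_two
    · exact Nat.le_add_right k n
  have hshift : ∀ n, TendstoUniformlyOn (fun k => g (k + n))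
      (fun x => limUnder atTop (fun k => g (k + n) x)) atTop (G n)ᶜ := fun n =>
    tendstoUniformlyOn_limUnder_of_dist_le_geometric_two (C := 2) fun k x hx => by
      have hk : 2 ^ k * |w (k + n) x| ≤ 1 := not_lt.1 fun h => hx (mem_iUnion.2 ⟨k, h⟩)
      rw [Real.dist_eq, abs_sub_comm, Nat.add_right_comm, div_self two_ne_zero,
        le_div_iff₀ (by positivity), mul_comm]
      exact hk
  set f' : X → ℝ := fun x => limUnder atTop (g · x)
  have hconv : ∀ n, ∀ x ∈ (G n)ᶜ,
      Tendsto (g · x) atTop (𝓝 (limUnder atTop fun k => g (k + n) x)) :=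
    fun n x hx => (tendsto_add_atTop_iff_nat n).1 ((hshift n).tendsto_at hx)
  have hunif : ∀ n, TendstoUniformlyOn (fun k => g (k + n)) f' atTop (G n)ᶜ := fun n =>
    (hshift n).congr_right fun x hx => (hconv n x hx).limUnder_eq.symm
  refine ⟨f', fun ε hε => ?_, ?_⟩
  · obtain ⟨n, hn⟩ := (hcapG.eventually_lt_const hε).exists
    exact ⟨G n, hGopen n, hn,
      (hunif n).continuousOn (Frequently.of_forall fun k => (hgc _).continuousOn)⟩
  · have hnull : μ (⋂ n, G n) = 0 := nonpos_iff_eq_zero.1 <| ge_of_tendsto' hcapG fun n =>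
      (measure_mono (iInter_subset _ n)).trans (D.measure_le_cap _)
    obtain ⟨ns, hns, hae⟩ := (tendstoInMeasure_of_tendsto_eLpNorm (by simpa using D.p_pos)
      (fun k => (hgc k).aestronglyMeasurable) hf hlim).exists_seq_tendsto_ae
    filter_upwards [hae, measure_eq_zero_iff_ae_notMem.1 hnull] with x hxf hxG
    obtain ⟨n, hn⟩ := not_forall.1 (mem_iInter.not.1 hxG)
    exact tendsto_nhds_unique hxf <|
      ((tendsto_add_atTop_iff_nat (f := (g · x)) n).1 ((hunif n).tendsto_at hn)).comp
        hns.tendsto_atTop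

theorem exists_continuous_fnorm_sub_lt (hreg : D.IsRegular) {f : X → ℝ} (hf : f ∈ D.F)
    {ε : ℝ≥0∞} (hε : 0 < ε) : ∃ g ∈ D.F, Continuous g ∧ D.fnorm (f - g) < ε := by
  obtain ⟨δ, hδ, hδε⟩ := ENNReal.lt_iff_exists_nnreal_btwn.1 (ENNReal.half_pos hε.ne')
  obtain ⟨g, hg, hgc, -, hfg⟩ := hreg.1 f hf δ (by simpa using hδ)
  refine ⟨g, hg, hgc, (D.fnorm_le_two_mul_rpow (D.sub_mem hf hg)).trans_lt ?_⟩
  have hV : 0 ≤ (∫ x, |(f - g) x| ^ p ∂μ) + D.Ep (f - g) :=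
    add_nonneg (integral_nonneg fun x => by positivity) (D.Ep_nonneg _ (D.sub_mem hf hg))
  rw [ENNReal.ofReal_rpow_of_nonneg hV (one_div_nonneg.2 D.p_pos.le)]
  calc 2 * ENNReal.ofReal (fpNorm μ p D.Ep (f - g)) < 2 * (ε / 2) := by
        refine ENNReal.mul_lt_mul_right (by norm_num) (by norm_num) (lt_of_lt_of_le ?_ hδε.le)
        simpa using (ENNReal.ofReal_lt_ofReal_iff (by simpa using hδ)).2 hfg
    _ = ε := ENNReal.mul_div_cancel (by norm_num) (by norm_num)

theorem tsum_two_pow_mul_fnorm_sub_ne_top {f : X → ℝ} (hf : f ∈ D.F) {g : ℕ → X → ℝ}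
    (hg : ∀ k, g k ∈ D.F) (hfg : ∀ k, D.fnorm (f - g k) ≤ 8⁻¹ ^ k) :
    ∑' k, 2 ^ k * D.fnorm (g (k + 1) - g k) ≠ ∞ := by
  have hk : ∀ k, 2 ^ k * D.fnorm (g (k + 1) - g k) ≤ 2 * 4⁻¹ ^ k := fun k => by
    have hsub : g (k + 1) - g k = (f - g k) - (f - g (k + 1)) := by abel
    calc 2 ^ k * D.fnorm (g (k + 1) - g k) ≤ 2 ^ k * (8⁻¹ ^ k + 8⁻¹ ^ (k + 1)) := by
          rw [hsub]
          gcongr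
          exact (D.fnorm_sub_le (D.sub_mem hf (hg k)) (D.sub_mem hf (hg (k + 1)))).trans
            (add_le_add (hfg k) (hfg (k + 1)))
      _ ≤ 2 ^ k * (8⁻¹ ^ k + 8⁻¹ ^ k) := by
          gcongr 2 ^ k * (_ + ?_)
          exact pow_le_pow_right_of_le_one' (a := (8 : ℝ≥0∞)⁻¹) (by norm_num) k.le_succ
      _ = 2 * (2 * 8⁻¹) ^ k := by rw [mul_pow]; ring
      _ = 2 * 4⁻¹ ^ k := by
          rw [show (8 : ℝ≥0∞) = 2 * 4 by norm_num, ENNReal.mul_inv (by simp) (by simp),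
            ← mul_assoc, ENNReal.mul_inv_cancel (by simp) (by simp), one_mul]
  refine ne_top_of_le_ne_top ?_ (ENNReal.tsum_le_tsum hk)
  rw [ENNReal.tsum_mul_left, ENNReal.tsum_geometric]
  exact ENNReal.mul_ne_top (by norm_num) (ENNReal.inv_ne_top.2 (tsub_pos_of_lt (by norm_num)).ne')

end LocalPDirichletSpace

/-- **Existence and uniqueness of quasicontinuous representatives** (Proposition 2.23):
in a regular local `p`-Dirichlet space, every `f ∈ F_p` has a quasicontinuous representative,
and two quasicontinuous representatives of elements of `F_p` that agree `μ`-a.e. agree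
outside a set of capacity zero. -/
theorem quasicontinuous_representative
    {X : Type} [MetricSpace X] [MeasurableSpace X] [BorelSpace X] {μ : Measure X} {p : ℝ}
    (D : LocalPDirichletSpace X μ p) (hreg : D.IsRegular) :
    (∀ f ∈ D.F, ∃ g : X → ℝ, D.QuasiContinuous g ∧ f =ᵐ[μ] g) ∧
    (∀ f ∈ D.F, ∀ g ∈ D.F, D.QuasiContinuous f → D.QuasiContinuous g → f =ᵐ[μ] g →
      D.cap {x | f x ≠ g x} = 0) := by
  refine ⟨fun f hf => ?_, fun f _ g _ hf hg hfg => D.cap_setOf_ne_eq_zero hf hg hfg⟩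
  choose g hg hgc hfg using fun k : ℕ => D.exists_continuous_fnorm_sub_lt hreg hf
    (ENNReal.pow_pos (ENNReal.inv_pos.2 (by norm_num : (8 : ℝ≥0∞) ≠ ∞)) k)
  refine D.exists_quasiContinuous_ae_eq_of_tendsto (D.memLp f hf).1 hg hgc
    (D.tsum_two_pow_mul_fnorm_sub_ne_top hf hg fun k => (hfg k).le) ?_
  refine tendsto_of_tendsto_of_tendsto_of_le_of_le tendsto_const_nhds
    (ENNReal.tendsto_pow_atTop_nhds_zero_of_lt_one (r := (8 : ℝ≥0∞)⁻¹) (by norm_num))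
    (fun _ => zero_le) fun k => ?_
  rw [← eLpNorm_neg, neg_sub]
  exact (D.eLpNorm_le_fnorm _).trans (hfg k).le
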